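/- In the boolean domain {0,1}, if every constraint in C excludes at most 2^{k} − 1 assignments (is nonempty), no constraint strongly depends on one literal, no constraint strongly depends on a 2-XOR relation, and C is not satisfied by the all-zeros or the all-ones assignment, then the constraint set C is extremely well-behaved: both boolean values are good, and for each good value δ ∈ {0,1} every constraint C serves as Γ_δ since C ⊨ (x_1 = δ) ∨ ⋯ ∨ (x_k = δ). -/

import Mathlib

/-!
Without unit-clause implicates every value occurs at every position of every constraint, so no
value is ever bad, and `Γ_δ` can be any constraint that rejects the constant tuple `¬δ`.

For a loose cycle of constraints, project each constraint onto the positions of the two vertices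
it shares with its neighbours. The resulting relations on `Bool` are left and right total (no
unit-clause implicate) and meet the diagonal (no `x_i ≠ x_j` implicate), and such relations are
closed under composition. So the composite around the cycle has a fixed point: a closed walk
of values on the shared vertices. Each constraint extends its two values to a satisfying tuple,
and since distinct edges meet only in shared vertices, these tuples glue to one assignment.
-/

/-- A value `δ` is bad (Definition csp-bad): it is `0`-bad if some constraint `C ∈ 𝒞`
and position `i` satisfy `C ⊨ (x_i ≠ δ)`, and `j`-bad if some `C ∈ 𝒞` and position `i`
are such that `C ∧ (x_i = δ)` forces some other variable of `C` to a `j'`-bad value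
with `j' < j`.  The inductive predicate captures "`j`-bad for some `j`". -/
inductive BadValue {D : Type} {k : ℕ} (𝒞 : Set (Set (Fin k → D))) : D → Prop
  | base (δ : D) (C : Set (Fin k → D)) (hC : C ∈ 𝒞) (i : Fin k)
      (h : ∀ t ∈ C, t i ≠ δ) : BadValue 𝒞 δ
  | step (δ : D) (C : Set (Fin k → D)) (hC : C ∈ 𝒞) (i m : Fin k) (hm : m ≠ i)
      (h : ∀ t ∈ C, t i = δ → BadValue 𝒞 (t m)) : BadValue 𝒞 δ

/-- A value is good if it is not bad. -/
def GoodValue {D : Type} {k : ℕ} (𝒞 : Set (Set (Fin k → D))) (δ : D) : Prop :=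
  ¬ BadValue 𝒞 δ

/-- The scope of a `k`-ary constraint: an assignment of variables to its positions. -/
abbrev Scope (k : ℕ) := Fin k → ℕ

/-- A formula: a finite list of constraints, each given by a scope together with the
set of satisfying `k`-tuples of its template. -/
abbrev Formula (D : Type) (k : ℕ) := List (Scope k × Set (Fin k → D))

/-- The set of variables occurring in a scope. -/
def scopeVars {k : ℕ} (s : Scope k) : Finset ℕ := Finset.image s Finset.univ

/-- The set of variables occurring in a list of scopes. -/
def formulaVars {k : ℕ} (L : List (Scope k)) : Finset ℕ :=
  L.foldr (fun s acc => scopeVars s ∪ acc) ∅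

/-- `σ` satisfies the formula `Φ`. -/
def Satisfies {D : Type} {k : ℕ} (σ : ℕ → D) (Φ : Formula D k) : Prop :=
  ∀ c ∈ Φ, (fun i => σ (c.1 i)) ∈ c.2

/-- `Φ` is a formula over the constraint set `𝒞`: each constraint uses a template
from `𝒞`, applied to a tuple of distinct variables. -/
def OverSet {D : Type} {k : ℕ} (𝒞 : Set (Set (Fin k → D))) (Φ : Formula D k) : Prop :=
  ∀ c ∈ Φ, c.2 ∈ 𝒞 ∧ Function.Injective c.1

/-- `Φ` is satisfiable. -/
def Sat {D : Type} {k : ℕ} (Φ : Formula D k) : Prop := ∃ σ : ℕ → D, Satisfies σ Φ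

/-- A list of scopes whose hypergraph is tree-like (connected and acyclic): built by
starting from a single edge and repeatedly attaching an edge meeting the previous
ones in exactly one vertex. -/
inductive TreeLike {k : ℕ} : List (Scope k) → Prop
  | single (s : Scope k) : TreeLike [s]
  | cons (s : Scope k) (L : List (Scope k)) (hL : TreeLike L)
      (h : ∃! v : ℕ, v ∈ scopeVars s ∧ v ∈ formulaVars L) : TreeLike (s :: L)

/-- The hypergraph of the scopes `L` is a (loose) cycle: consecutive edges (cyclically)
share exactly one vertex, non-consecutive edges are disjoint. -/
def IsCycle {k : ℕ} (L : List (Scope k)) : Prop :=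
  2 ≤ L.length ∧
  ∀ i j : Fin L.length, i < j →
    (if (j : ℕ) = (i : ℕ) + 1 ∨ ((i : ℕ) = 0 ∧ (j : ℕ) = L.length - 1)
      then (scopeVars (L.get i) ∩ scopeVars (L.get j)).card = 1
      else scopeVars (L.get i) ∩ scopeVars (L.get j) = ∅)

/-- A list of scopes is unicyclic if deleting some edge leaves a tree-like hypergraph. -/
def Unicyclic {k : ℕ} (L : List (Scope k)) : Prop :=
  ∃ e ∈ L, TreeLike (L.erase e)

/-- Definition csp-vwbehaved: `𝒞` is very well-behaved. -/
def VeryWellBehaved {D : Type} {k : ℕ} (𝒞 : Set (Set (Fin k → D))) : Prop :=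
  (∃ δ : D, GoodValue 𝒞 δ) ∧
  (∀ δ : D, ∃ C ∈ 𝒞, (fun _ => δ) ∉ C) ∧
  (∀ Φ : Formula D k, OverSet 𝒞 Φ → IsCycle (Φ.map Prod.fst) →
    ∃ σ : ℕ → D, Satisfies σ Φ ∧ ∀ c ∈ Φ, ∀ i : Fin k, GoodValue 𝒞 (σ (c.1 i)))

open Function

theorem goodValue_of_forall_exists_apply_eq {D : Type} {k : ℕ} {𝒞 : Set (Set (Fin k → D))}
    (h𝒞 : ∀ C ∈ 𝒞, ∀ (i : Fin k) (δ : D), ∃ t ∈ C, t i = δ) (δ : D) : GoodValue 𝒞 δ := by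
  intro hbad
  induction hbad with
  | base δ C hC i h =>
    obtain ⟨t, ht, hti⟩ := h𝒞 C hC i δ
    exact h t ht hti
  | step δ C hC i _ _ _ ih =>
    obtain ⟨t, ht, hti⟩ := h𝒞 C hC i δ
    exact ih t ht hti

theorem Fin.val_add_one_of_val_add_one_eq {n : ℕ} [NeZero n] {i : Fin n}
    (h : (i : ℕ) + 1 = n) : ((i + 1 : Fin n) : ℕ) = 0 := by
  rw [Fin.val_add, Fin.val_one', Nat.add_mod_mod, h, Nat.mod_self]

def BiTotalDiag {α : Type*} (R : α → α → Prop) : Prop :=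
  Relator.BiTotal R ∧ ∃ a, R a a

theorem BiTotalDiag.comp {R S : Bool → Bool → Prop} (hR : BiTotalDiag R) (hS : BiTotalDiag S) :
    BiTotalDiag (Relation.Comp R S) := by
  obtain ⟨hRtot, r, hr⟩ := hR
  obtain ⟨hStot, s, hs⟩ := hS
  refine ⟨hRtot.trans (fun _ b _ hab hbc => ⟨b, hab, hbc⟩) hStot, ?_⟩
  by_cases hrs : S r r
  · exact ⟨r, r, hr, hrs⟩
  by_cases hsr : R s s
  · exact ⟨s, s, hsr, hs⟩
  -- Otherwise `r ≠ s`, and totality at the other value forces `R s r` and `S r s`.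
  have hrs_ne : r ≠ s := fun h => hrs (h ▸ hs)
  have hBool : ∀ x y z : Bool, x ≠ z → y ≠ z → x = y := by decide
  obtain ⟨x, hx⟩ := hRtot.1 s
  obtain ⟨y, hy⟩ := hStot.1 r
  have hxr : x = r := hBool x r s (fun h => hsr (h ▸ hx)) hrs_ne
  have hys : y = s := hBool y s r (fun h => hrs (h ▸ hy)) hrs_ne.symm
  exact ⟨s, r, hxr ▸ hx, hys ▸ hy⟩

def projRel {α : Type*} {k : ℕ} (C : Set (Fin k → α)) (p q : Fin k) : α → α → Prop :=
  fun x y => ∃ t ∈ C, t p = x ∧ t q = y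

theorem biTotalDiag_projRel {α : Type*} [Nonempty α] {k : ℕ} {C : Set (Fin k → α)}
    (hval : ∀ i a, ∃ t ∈ C, t i = a) (hdiag : ∀ i j, i ≠ j → ∃ t ∈ C, t i = t j)
    (p q : Fin k) : BiTotalDiag (projRel C p q) := by
  refine ⟨⟨fun x => ?_, fun y => ?_⟩, ?_⟩
  · obtain ⟨t, ht, htx⟩ := hval p x
    exact ⟨t q, t, ht, htx, rfl⟩
  · obtain ⟨t, ht, hty⟩ := hval q y
    exact ⟨t p, t, ht, rfl, hty⟩
  by_cases hpq : p = q
  · obtain ⟨t, ht, -⟩ := hval p (Classical.arbitrary α)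
    exact ⟨t p, t, ht, rfl, by rw [hpq]⟩
  · obtain ⟨t, ht, htpq⟩ := hdiag p q hpq
    exact ⟨t p, t, ht, rfl, htpq.symm⟩

def walkRel {α : Type*} (R : ℕ → α → α → Prop) : ℕ → α → α → Prop
  | 0 => Eq
  | m + 1 => Relation.Comp (walkRel R m) (R m)

theorem exists_walk_of_walkRel {α : Type*} {R : ℕ → α → α → Prop} {m : ℕ} {x y : α}
    (h : walkRel R m x y) :
    ∃ c : ℕ → α, c 0 = x ∧ c m = y ∧ ∀ i < m, R i (c i) (c (i + 1)) := by
  induction m generalizing y with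
  | zero => exact ⟨fun _ => x, rfl, h, fun i hi => (Nat.not_lt_zero i hi).elim⟩
  | succ m ih =>
    obtain ⟨z, hz, hzy⟩ := h
    obtain ⟨c, hc0, hcm, hc⟩ := ih hz
    refine ⟨update c (m + 1) y, by simp [hc0], by simp, fun i hi => ?_⟩
    rcases Nat.lt_succ_iff_lt_or_eq.mp hi with hi | rfl
    · rw [update_of_ne (by omega), update_of_ne (by omega)]
      exact hc i hi
    · simpa [hcm] using hzy

theorem biTotalDiag_walkRel {R : ℕ → Bool → Bool → Prop} (hR : ∀ i, BiTotalDiag (R i)) :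
    ∀ m, BiTotalDiag (walkRel R m)
  | 0 => ⟨Relator.bi_total_eq, true, rfl⟩
  | m + 1 => (biTotalDiag_walkRel hR m).comp (hR m)

open Fin.NatCast in
theorem exists_cyclic_walk {n : ℕ} [NeZero n] {R : Fin n → Bool → Bool → Prop}
    (hR : ∀ i, BiTotalDiag (R i)) : ∃ c : Fin n → Bool, ∀ i, R i (c i) (c (i + 1)) := by
  obtain ⟨a, ha⟩ := (biTotalDiag_walkRel (R := fun m => R m) (fun m => hR m) n).2
  obtain ⟨c, hc0, hcn, hc⟩ := exists_walk_of_walkRel ha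
  refine ⟨fun i => c i, fun i => ?_⟩
  have hsucc : c ((i + 1 : Fin n) : ℕ) = c (i + 1) := by
    rcases Nat.lt_or_ge ((i : ℕ) + 1) n with hlt | hge
    · rw [Fin.val_add_one_of_lt' hlt]
    · have hlast : (i : ℕ) + 1 = n := by omega
      rw [Fin.val_add_one_of_val_add_one_eq hlast, hlast, hc0, hcn]
  simpa [hsucc] using hc i i.isLt

theorem exists_comp_eq_of_agree {ι κ α β : Type*} [Nonempty β] (e : ι → κ → α)
    (t : ι → κ → β) (h : ∀ i j p q, e i p = e j q → t i p = t j q) :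
    ∃ σ : α → β, ∀ i, σ ∘ e i = t i := by
  have hfac : FactorsThrough (fun ip : ι × κ => t ip.1 ip.2) (fun ip => e ip.1 ip.2) :=
    fun ip jq hij => h _ _ _ _ hij
  exact ⟨extend _ _ (fun _ => Classical.arbitrary β),
    fun i => funext fun p => hfac.extend_apply _ (i, p)⟩

theorem mem_scopeVars {k : ℕ} {s : Scope k} {x : ℕ} : x ∈ scopeVars s ↔ ∃ p, s p = x := by
  simp [scopeVars]

section LooseCycle

variable {k n : ℕ} [NeZero n] (e : Fin n → Scope k)

theorem agree_of_agree_succ {β : Type*} (t : Fin n → Fin k → β) (hinj : ∀ i, Injective (e i))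
    (hfar : ∀ i j, i ≠ j → j ≠ i + 1 → i ≠ j + 1 → scopeVars (e i) ∩ scopeVars (e j) = ∅)
    (hnext : ∀ i a b, e i a = e (i + 1) b → t i a = t (i + 1) b) :
    ∀ i j a b, e i a = e j b → t i a = t j b := by
  intro i j a b hab
  by_cases hij : i = j
  · subst hij
    rw [hinj i hab]
  by_cases hj : j = i + 1
  · subst hj
    exact hnext i a b hab
  by_cases hi : i = j + 1
  · subst hi
    exact (hnext j b a hab.symm).symm
  have hx : e i a ∈ scopeVars (e i) ∩ scopeVars (e j) :=
    Finset.mem_inter.mpr ⟨mem_scopeVars.mpr ⟨a, rfl⟩, mem_scopeVars.mpr ⟨b, hab.symm⟩⟩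
  simp [hfar i j hij hj hi] at hx

theorem exists_forall_comp_mem_of_cycle (C : Fin n → Set (Fin k → Bool))
    (hinj : ∀ i, Injective (e i))
    (hsucc : ∀ i, ∃ w, scopeVars (e i) ∩ scopeVars (e (i + 1)) = {w})
    (hfar : ∀ i j, i ≠ j → j ≠ i + 1 → i ≠ j + 1 → scopeVars (e i) ∩ scopeVars (e j) = ∅)
    (hC : ∀ i p q, BiTotalDiag (projRel (C i) p q)) :
    ∃ σ : ℕ → Bool, ∀ i, σ ∘ e i ∈ C i := by
  choose v hv using hsucc
  have hmem : ∀ i, v i ∈ scopeVars (e i) ∩ scopeVars (e (i + 1)) := fun i => by simp [hv i]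
  -- `q i` and `p i` are the positions of the shared vertex `v i` in the edges `i` and `i + 1`.
  choose q hq using fun i => mem_scopeVars.mp (Finset.mem_inter.mp (hmem i)).1
  choose p hp using fun i => mem_scopeVars.mp (Finset.mem_inter.mp (hmem i)).2
  obtain ⟨c, hc⟩ := exists_cyclic_walk fun i => hC (i + 1) (p i) (q (i + 1))
  have hlocal : ∀ j, ∃ t ∈ C j, t (p (j - 1)) = c (j - 1) ∧ t (q j) = c j := fun j => by
    simpa only [projRel, sub_add_cancel] using hc (j - 1)
  choose t ht htp htq using hlocal
  have hnext : ∀ i a b, e i a = e (i + 1) b → t i a = t (i + 1) b := by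
    intro i a b hab
    have hx : e i a ∈ scopeVars (e i) ∩ scopeVars (e (i + 1)) :=
      Finset.mem_inter.mpr ⟨mem_scopeVars.mpr ⟨a, rfl⟩, mem_scopeVars.mpr ⟨b, hab.symm⟩⟩
    rw [hv i, Finset.mem_singleton] at hx
    have ha : a = q i := hinj i (hx.trans (hq i).symm)
    have hb : b = p i := hinj (i + 1) (hab.symm.trans (hx.trans (hp i).symm))
    have hpi : t (i + 1) (p i) = c i := by simpa only [add_sub_cancel_right] using htp (i + 1)
    rw [ha, hb, htq, hpi]
  obtain ⟨σ, hσ⟩ := exists_comp_eq_of_agree e t (agree_of_agree_succ e t hinj hfar hnext)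
  exact ⟨σ, fun i => (hσ i).symm ▸ ht i⟩

end LooseCycle

theorem IsCycle.card_inter_succ {k : ℕ} {L : List (Scope k)} (hL : IsCycle L)
    [NeZero L.length] (i : Fin L.length) :
    (scopeVars (L.get i) ∩ scopeVars (L.get (i + 1))).card = 1 := by
  rcases Nat.lt_or_ge ((i : ℕ) + 1) L.length with hlt | hge
  · have hval := Fin.val_add_one_of_lt' hlt
    have := hL.2 i (i + 1) (Fin.lt_def.mpr (by omega))
    rwa [if_pos (Or.inl hval)] at this
  · have hlast : (i : ℕ) + 1 = L.length := by omega
    have hzero : i + 1 = 0 := Fin.ext (Fin.val_add_one_of_val_add_one_eq hlast)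
    have := hL.2 0 i (Fin.lt_def.mpr (by rw [Fin.val_zero]; have := hL.1; omega))
    rwa [if_pos (Or.inr ⟨rfl, by omega⟩), Finset.inter_comm, ← hzero] at this

theorem IsCycle.inter_eq_empty {k : ℕ} {L : List (Scope k)} (hL : IsCycle L)
    [NeZero L.length] {i j : Fin L.length} (hij : i ≠ j) (hj : j ≠ i + 1) (hi : i ≠ j + 1) :
    scopeVars (L.get i) ∩ scopeVars (L.get j) = ∅ := by
  wlog hlt : i < j generalizing i j
  · rw [Finset.inter_comm]
    exact this (Ne.symm hij) hi hj (lt_of_le_of_ne (not_lt.mp hlt) (Ne.symm hij))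
  have hnot : ¬((j : ℕ) = i + 1 ∨ ((i : ℕ) = 0 ∧ (j : ℕ) = L.length - 1)) := by
    rintro (hsucc | ⟨hi0, hjlast⟩)
    · exact hj (Fin.ext (by rw [Fin.val_add_one_of_lt' (by omega), hsucc]))
    · exact hi (Fin.ext (by rw [Fin.val_add_one_of_val_add_one_eq (by omega), hi0]))
  simpa only [if_neg hnot] using hL.2 i j hlt

theorem sat_of_isCycle {k : ℕ} {Φ : Formula Bool k} (hcyc : IsCycle (Φ.map Prod.fst))
    (hΦ : ∀ c ∈ Φ, Injective c.1 ∧ ∀ p q, BiTotalDiag (projRel c.2 p q)) : Sat Φ := by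
  have hlen : (Φ.map Prod.fst).length = Φ.length := List.length_map _
  have : NeZero (Φ.map Prod.fst).length := ⟨by have := hcyc.1; omega⟩
  let C : Fin (Φ.map Prod.fst).length → Set (Fin k → Bool) := fun i => (Φ.get (i.cast hlen)).2
  have hget : ∀ i, (Φ.map Prod.fst).get i = (Φ.get (i.cast hlen)).1 := fun i => by simp
  have hmem : ∀ i : Fin (Φ.map Prod.fst).length, Φ.get (i.cast hlen) ∈ Φ :=
    fun i => List.get_mem _ _
  obtain ⟨σ, hσ⟩ := exists_forall_comp_mem_of_cycle (Φ.map Prod.fst).get C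
    (fun i => hget i ▸ (hΦ _ (hmem i)).1)
    (fun i => Finset.card_eq_one.mp (hcyc.card_inter_succ i))
    (fun i j hij hj hi => hcyc.inter_eq_empty hij hj hi) (fun i => (hΦ _ (hmem i)).2)
  refine ⟨σ, fun c hc => ?_⟩
  obtain ⟨j, rfl⟩ := List.mem_iff_get.mp hc
  simpa [C, hget, comp_def] using hσ (j.cast hlen.symm)

theorem exists_apply_eq_of_const_notMem {k : ℕ} {C : Set (Fin k → Bool)} {δ : Bool}
    (hC : (fun _ => !δ) ∉ C) : ∀ t ∈ C, ∃ i, t i = δ := by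
  intro t ht
  by_contra! hne
  exact hC (by convert ht using 1; funext i; exact Bool.not_eq_iff.mpr (hne i).symm)

theorem stmt18_general {k : ℕ} (𝒞 : Set (Set (Fin k → Bool)))
    (hlit : ∀ C ∈ 𝒞, ∀ i : Fin k, ∀ δ : Bool, ¬ (∀ t ∈ C, t i = δ))
    (hxor : ∀ C ∈ 𝒞, ∀ i j : Fin k, i ≠ j → ¬ (∀ t ∈ C, t i ≠ t j))
    (h0 : ∃ C ∈ 𝒞, (fun _ => false) ∉ C)
    (h1 : ∃ C ∈ 𝒞, (fun _ => true) ∉ C) :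
    GoodValue 𝒞 false ∧ GoodValue 𝒞 true ∧ VeryWellBehaved 𝒞 ∧
    ∃ Γ : Bool → Set (Fin k → Bool), ∀ δ : Bool, GoodValue 𝒞 δ →
      Γ δ ∈ 𝒞 ∧ ∀ t ∈ Γ δ, ∃ i : Fin k, t i = δ := by
  have hval : ∀ C ∈ 𝒞, ∀ i δ, ∃ t ∈ C, t i = δ := fun C hC i δ => by
    simpa using hlit C hC i (!δ)
  have hgood : ∀ δ, GoodValue 𝒞 δ := goodValue_of_forall_exists_apply_eq hval
  have hnotConst : ∀ δ : Bool, ∃ C ∈ 𝒞, (fun _ => δ) ∉ C := Bool.forall_bool.mpr ⟨h0, h1⟩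
  choose Γ hΓ hΓconst using fun δ => hnotConst (!δ)
  refine ⟨hgood false, hgood true, ⟨⟨true, hgood true⟩, hnotConst, fun Φ hΦ hcyc => ?_⟩,
    Γ, fun δ _ => ⟨hΓ δ, exists_apply_eq_of_const_notMem (hΓconst δ)⟩⟩
  have hdiag : ∀ C ∈ 𝒞, ∀ i j, i ≠ j → ∃ t ∈ C, t i = t j := fun C hC i j hij => by
    simpa using hxor C hC i j hij
  obtain ⟨σ, hσ⟩ := sat_of_isCycle hcyc fun c hc =>
    ⟨(hΦ c hc).2, biTotalDiag_projRel (hval _ (hΦ c hc).1) (hdiag _ (hΦ c hc).1)⟩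
  exact ⟨σ, hσ, fun _ _ _ => hgood _⟩

/-- Over the boolean domain: if every constraint of `𝒞` is nonempty, no constraint
strongly depends on a literal (no unit clause implicate), no constraint strongly
depends on a 2-XOR relation (no `x_i ≠ x_j` implicate), and some constraint is not
`0`-valid and some is not `1`-valid, then `𝒞` is extremely well-behaved: both boolean
values are good, `𝒞` is very well-behaved, and there is a map `Γ` from good values to
constraints with `Γ_δ ⊨ (x_1 = δ) ∨ ⋯ ∨ (x_k = δ)`. -/
theorem stmt18 {k : ℕ} (hk : 1 ≤ k) (𝒞 : Set (Set (Fin k → Bool)))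
    (hne : ∀ C ∈ 𝒞, C.Nonempty)
    (hlit : ∀ C ∈ 𝒞, ∀ i : Fin k, ∀ δ : Bool, ¬ (∀ t ∈ C, t i = δ))
    (hxor : ∀ C ∈ 𝒞, ∀ i j : Fin k, i ≠ j → ¬ (∀ t ∈ C, t i ≠ t j))
    (h0 : ∃ C ∈ 𝒞, (fun _ => false) ∉ C)
    (h1 : ∃ C ∈ 𝒞, (fun _ => true) ∉ C) :
    GoodValue 𝒞 false ∧ GoodValue 𝒞 true ∧ VeryWellBehaved 𝒞 ∧
    ∃ Γ : Bool → Set (Fin k → Bool), ∀ δ : Bool, GoodValue 𝒞 δ →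
      Γ δ ∈ 𝒞 ∧ ∀ t ∈ Γ δ, ∃ i : Fin k, t i = δ :=
  stmt18_general 𝒞 hlit hxor h0 h1
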